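/- Let λ > 0. Then for every x ∈ ℝ: (∫_ℝ |G¹_λ(r + x) − G¹_λ(r)|² dr)^{1/2} ≤ max(λ^{−3/4}, (16λ)^{−1/4}) · min(1, |x|). -/

import Mathlib

open MeasureTheory Real Set


lemma key_ineq {t : ℝ} (ht : 0 ≤ t) :
    1 - Real.exp (-t) - t * Real.exp (-t) ≤ t ^ 2 / 2 := by
  set g : ℝ → ℝ := fun s => s ^ 2 / 2 - 1 + (1 + s) * Real.exp (-s) with hg
  have hd : ∀ s : ℝ, HasDerivAt g (s - s * Real.exp (-s)) s := by
    intro s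
    have h1 : HasDerivAt (fun u : ℝ => u ^ 2 / 2 - 1) s s := by
      simpa using ((hasDerivAt_pow 2 s).div_const 2).sub_const 1
    have h2 : HasDerivAt (fun u : ℝ => Real.exp (-u)) (-Real.exp (-s)) s := by
      simpa [Function.comp_def] using (Real.hasDerivAt_exp (-s)).comp s (hasDerivAt_neg s)
    have h3 : HasDerivAt (fun u : ℝ => (1 + u) * Real.exp (-u))
        (1 * Real.exp (-s) + (1 + s) * -Real.exp (-s)) s :=
      (((hasDerivAt_id s).const_add 1).mul h2)
    have : HasDerivAt g (s + (1 * Real.exp (-s) + (1 + s) * -Real.exp (-s))) s := h1.add h3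
    convert this using 1
    ring
  have hmono : MonotoneOn g (Ici (0 : ℝ)) := by
    apply monotoneOn_of_deriv_nonneg (convex_Ici 0)
    · exact (Continuous.continuousOn (by fun_prop))
    · intro s _
      exact (hd s).differentiableAt.differentiableWithinAt
    · intro s hs
      rw [interior_Ici, mem_Ioi] at hs
      rw [(hd s).deriv]
      have h1 : Real.exp (-s) ≤ 1 := Real.exp_le_one_iff.mpr (by linarith [hs.le])
      nlinarith [hs.le]
  have h0 : g 0 = 0 := by simp [hg]
  have := hmono (self_mem_Ici) (mem_Ici.mpr ht) ht
  rw [h0] at this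
  simp only [hg] at this
  nlinarith [this]


lemma intExpIoi {b : ℝ} (hb : 0 < b) (c : ℝ) :
    ∫ r in Ioi c, Real.exp (-(b * r)) = b⁻¹ * Real.exp (-(b * c)) := by
  have h := integral_comp_mul_left_Ioi (fun y => Real.exp (-y)) c hb
  simp only [integral_exp_neg_Ioi, smul_eq_mul] at h
  exact h

lemma intOnExpIoi {b : ℝ} (hb : 0 < b) (c : ℝ) :
    IntegrableOn (fun r : ℝ => Real.exp (-(b * r))) (Ioi c) :=
  (exp_neg_integrableOn_Ioi c hb).congr_fun (fun y _ => by ring_nf) measurableSet_Ioi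

lemma intOnExpIic {b : ℝ} (hb : 0 < b) (c : ℝ) :
    IntegrableOn (fun r : ℝ => Real.exp (b * r)) (Iic c) := by
  rw [show (volume : Measure ℝ) = Measure.map (fun x : ℝ => -x) volume from
    (Measure.map_neg_eq_self _).symm]
  have m : MeasurableEmbedding fun x : ℝ => -x := (Homeomorph.neg ℝ).measurableEmbedding
  rw [m.integrableOn_map_iff]
  have : ((fun x : ℝ => -x) ⁻¹' Iic c) = Ici (-c) := by
    ext y; simp [neg_le]
  rw [this]
  apply (integrableOn_Ici_iff_integrableOn_Ioi).mpr
  exact (intOnExpIoi hb (-c)).congr_fun (fun y _ => by simp)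
    measurableSet_Ioi

lemma intExpIic {b : ℝ} (hb : 0 < b) (c : ℝ) :
    ∫ r in Iic c, Real.exp (b * r) = b⁻¹ * Real.exp (b * c) := by
  have h := integral_comp_neg_Ioi (-c) (fun r : ℝ => Real.exp (b * r))
  simp only [neg_neg] at h
  rw [← h]
  rw [show (∫ r in Ioi (-c), Real.exp (b * -r)) = ∫ r in Ioi (-c), Real.exp (-(b * r)) from
    setIntegral_congr_fun measurableSet_Ioi fun r _ => by ring_nf]
  rw [intExpIoi hb (-c)]
  ring_nf

lemma intExpInterval {b : ℝ} (hb : b ≠ 0) (u v : ℝ) :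
    ∫ r in u..v, Real.exp (b * r) = (Real.exp (b * v) - Real.exp (b * u)) / b := by
  have hd : ∀ r : ℝ, HasDerivAt (fun s => Real.exp (b * s) / b) (Real.exp (b * r)) r := by
    intro r
    have h1 : HasDerivAt (fun s : ℝ => b * s) b r := by
      simpa using (hasDerivAt_id r).const_mul b
    have h2 := (Real.hasDerivAt_exp (b * r)).comp r h1
    have h3 := h2.div_const b
    simpa [mul_div_assoc, mul_div_cancel_right₀ _ hb] using h3
  have hi : IntervalIntegrable (fun r => Real.exp (b * r)) volume u v :=
    (Real.continuous_exp.comp (continuous_const.mul continuous_id)).intervalIntegrable u v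
  rw [intervalIntegral.integral_eq_sub_of_hasDerivAt (fun r _ => hd r) hi]
  ring

lemma green_int {a : ℝ} (ha : 0 < a) {x : ℝ} (hx : 0 ≤ x) :
    ∫ r : ℝ, (Real.exp (-a * |r + x|) / (2 * a) - Real.exp (-a * |r|) / (2 * a)) ^ 2
      = (1 - Real.exp (-(a * x))) / (2 * a ^ 3) - x * Real.exp (-(a * x)) / (2 * a ^ 2) := by
  have ha' : a ≠ 0 := ha.ne'
  have h2a : (0 : ℝ) < 2 * a := by linarith
  set f : ℝ → ℝ :=
    fun r => (Real.exp (-a * |r + x|) / (2 * a) - Real.exp (-a * |r|) / (2 * a)) ^ 2 with hf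
  set c₁ : ℝ := ((Real.exp (a * x) - 1) / (2 * a)) ^ 2 with hc₁
  set c₂ : ℝ := ((1 - Real.exp (-(a * x))) / (2 * a)) ^ 2 with hc₂
  have hIic : EqOn f (fun r => c₁ * Real.exp ((2 * a) * r)) (Iic (-x)) := by
    intro r hr
    have hr' : r ≤ -x := hr
    have h1 : r + x ≤ 0 := by linarith
    have h2 : r ≤ 0 := by linarith
    simp only [hf, hc₁]
    rw [abs_of_nonpos h1, abs_of_nonpos h2,
      show -a * -(r + x) = a * r + a * x by ring, Real.exp_add,
      show -a * -r = a * r by ring,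
      show (2 * a) * r = a * r + a * r by ring, Real.exp_add]
    field_simp
  have hIoi : EqOn f (fun r => c₂ * Real.exp (-((2 * a) * r))) (Ioi 0) := by
    intro r hr
    have h1 : (0 : ℝ) < r := hr
    simp only [hf, hc₂]
    rw [abs_of_pos h1, abs_of_nonneg (by linarith : 0 ≤ r + x),
      show -a * (r + x) = -(a * r) + -(a * x) by ring, Real.exp_add,
      show -a * r = -(a * r) by ring,
      show -((2 * a) * r) = -(a * r) + -(a * r) by ring, Real.exp_add]
    field_simp
    ring
  set m : ℝ → ℝ := fun r =>
    (Real.exp (-(2 * (a * x))) * Real.exp (-(2 * a) * r) + Real.exp ((2 * a) * r)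
      - 2 * Real.exp (-(a * x))) / (4 * a ^ 2) with hm
  have hmid : EqOn f m (Ioc (-x) 0) := by
    intro r hr
    have h1 : 0 ≤ r + x := by have := hr.1; linarith
    have h2 : r ≤ 0 := hr.2
    have hu := Real.exp_pos (a * r)
    have hv := Real.exp_pos (a * x)
    simp only [hf, hm]
    rw [abs_of_nonneg h1, abs_of_nonpos h2,
      show -a * (r + x) = -(a * r + a * x) by ring,
      show -a * -r = a * r by ring,
      show -(2 * (a * x)) = -(a * x + a * x) by ring,
      show -(2 * a) * r = -(a * r + a * r) by ring,
      show (2 * a) * r = a * r + a * r by ring]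
    simp only [Real.exp_neg, Real.exp_add]
    field_simp
    ring
  -- integrability
  have hcont : Continuous f := by fun_prop
  have hInt1 : IntegrableOn f (Iic (-x)) :=
    IntegrableOn.congr_fun ((intOnExpIic h2a (-x)).const_mul c₁) hIic.symm measurableSet_Iic
  have hInt3 : IntegrableOn f (Ioi 0) :=
    IntegrableOn.congr_fun ((intOnExpIoi h2a 0).const_mul c₂) hIoi.symm measurableSet_Ioi
  have hInt2 : IntegrableOn f (Ioc (-x) 0) := hcont.integrableOn_Ioc
  have hInt23 : IntegrableOn f (Ioi (-x)) := by
    rw [← Ioc_union_Ioi_eq_Ioi (by linarith : -x ≤ (0 : ℝ))]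
    exact hInt2.union hInt3
  have hsplit2 : ∫ r in Ioi (-x), f r = (∫ r in Ioc (-x) 0, f r) + ∫ r in Ioi 0, f r := by
    rw [← Ioc_union_Ioi_eq_Ioi (by linarith : -x ≤ (0 : ℝ))]
    exact setIntegral_union (Ioc_disjoint_Ioi le_rfl) measurableSet_Ioi hInt2 hInt3
  have hsplit : ∫ r : ℝ, f r = (∫ r in Iic (-x), f r) + (∫ r in Ioc (-x) 0, f r)
      + ∫ r in Ioi 0, f r := by
    rw [← intervalIntegral.integral_Iic_add_Ioi hInt1 hInt23, hsplit2]; ring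
  -- values
  have V1 : ∫ r in Iic (-x), f r = c₁ * ((2 * a)⁻¹ * Real.exp ((2 * a) * (-x))) := by
    rw [setIntegral_congr_fun measurableSet_Iic hIic, integral_const_mul, intExpIic h2a]
  have V3 : ∫ r in Ioi 0, f r = c₂ * ((2 * a)⁻¹ * Real.exp (-((2 * a) * 0))) := by
    rw [setIntegral_congr_fun measurableSet_Ioi hIoi, integral_const_mul, intExpIoi h2a]
  have hb1 : -(2 * a) ≠ 0 := by simpa using ha'
  have hb2 : (2 * a) ≠ 0 := by simpa using ha'
  have i1 : IntervalIntegrable (fun r => Real.exp (-(2 * (a * x))) * Real.exp (-(2 * a) * r))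
      volume (-x) 0 := (by fun_prop : Continuous _).intervalIntegrable _ _
  have i2 : IntervalIntegrable (fun r : ℝ => Real.exp ((2 * a) * r)) volume (-x) 0 :=
    (by fun_prop : Continuous _).intervalIntegrable _ _
  have i3 : IntervalIntegrable (fun _ : ℝ => 2 * Real.exp (-(a * x))) volume (-x) 0 :=
    intervalIntegrable_const
  have V2 : ∫ r in Ioc (-x) 0, f r =
      (Real.exp (-(2 * (a * x))) * ((Real.exp (-(2 * a) * 0) - Real.exp (-(2 * a) * (-x))) / -(2 * a))
        + (Real.exp ((2 * a) * 0) - Real.exp ((2 * a) * (-x))) / (2 * a)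
        - (0 - -x) * (2 * Real.exp (-(a * x)))) / (4 * a ^ 2) := by
    rw [setIntegral_congr_fun measurableSet_Ioc hmid]
    rw [← intervalIntegral.integral_of_le (by linarith : -x ≤ (0 : ℝ))]
    simp only [hm]
    rw [intervalIntegral.integral_div]
    rw [intervalIntegral.integral_sub (i1.add i2) i3, intervalIntegral.integral_add i1 i2]
    rw [intervalIntegral.integral_const_mul, intExpInterval hb1, intExpInterval hb2,
      intervalIntegral.integral_const]
    simp only [smul_eq_mul]
  rw [hsplit, V1, V2, V3]
  simp only [hc₁, hc₂]
  have hw := Real.exp_pos (a * x)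
  rw [show (2 * a) * (-x) = -(a * x + a * x) by ring,
    show -(2 * (a * x)) = -(a * x + a * x) by ring,
    show -(2 * a) * (0 : ℝ) = -(0:ℝ) by ring,
    show -(2 * a) * (-x) = a * x + a * x by ring,
    show (2 * a) * (0 : ℝ) = (0:ℝ) by ring]
  simp only [Real.exp_neg, Real.exp_add, Real.exp_zero]
  field_simp
  ring


/-- The one-dimensional Green's function `G¹_λ(r) = exp(-√λ |r|) / (2√λ)`. -/
noncomputable def green1 (lam : ℝ) (r : ℝ) : ℝ :=
  Real.exp (-Real.sqrt lam * |r|) / (2 * Real.sqrt lam)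

lemma key_bound (lam : ℝ) (hlam : 0 < lam) {x : ℝ} (hx : 0 ≤ x) :
    (∫ r : ℝ, |green1 lam (r + x) - green1 lam r| ^ 2) ^ ((1 : ℝ) / 2)
      ≤ max (lam ^ (-(3 : ℝ) / 4)) ((16 * lam) ^ (-(1 : ℝ) / 4)) * min 1 x := by
  set a : ℝ := Real.sqrt lam with hadef
  have ha : 0 < a := Real.sqrt_pos.mpr hlam
  have ha' : a ≠ 0 := ha.ne'
  set M : ℝ := max (lam ^ (-(3 : ℝ) / 4)) ((16 * lam) ^ (-(1 : ℝ) / 4)) with hM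
  have hM0 : 0 < M :=
    lt_of_lt_of_le (Real.rpow_pos_of_pos hlam _) (le_max_left _ _)
  have hminn : 0 ≤ min 1 x := le_min zero_le_one hx
  have hq0 : 0 ≤ M * min 1 x := mul_nonneg hM0.le hminn
  have h16 : (0 : ℝ) < 16 * lam := by linarith
  have hint : (∫ r : ℝ, |green1 lam (r + x) - green1 lam r| ^ 2)
      = (1 - Real.exp (-(a * x))) / (2 * a ^ 3) - x * Real.exp (-(a * x)) / (2 * a ^ 2) := by
    rw [← green_int ha hx]
    congr 1
    funext r
    rw [sq_abs]
    rfl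
  have hI0 : 0 ≤ (1 - Real.exp (-(a * x))) / (2 * a ^ 3)
      - x * Real.exp (-(a * x)) / (2 * a ^ 2) := by
    rw [← hint]
    exact integral_nonneg fun r => by positivity
  rw [hint]
  have ha3 : a ^ 3 = lam ^ ((3 : ℝ) / 2) := by
    rw [hadef, Real.sqrt_eq_rpow, ← Real.rpow_natCast (lam ^ ((1 : ℝ) / 2)) 3,
      ← Real.rpow_mul hlam.le]
    norm_num
  have hsq1 : (lam ^ (-(3 : ℝ) / 4)) ^ 2 = 1 / a ^ 3 := by
    rw [← Real.rpow_natCast (lam ^ (-(3 : ℝ) / 4)) 2, ← Real.rpow_mul hlam.le, ha3,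
      show (-(3:ℝ)/4 * ((2:ℕ):ℝ)) = -(3/2 : ℝ) by push_cast; ring,
      Real.rpow_neg hlam.le, one_div]
  have hsq2 : ((16 * lam) ^ (-(1 : ℝ) / 4)) ^ 2 = 1 / (4 * a) := by
    have hs : Real.sqrt (16 * lam) = 4 * a := by
      rw [Real.sqrt_mul (by norm_num : (0:ℝ) ≤ 16), hadef,
        show (16 : ℝ) = 4 ^ 2 by norm_num, Real.sqrt_sq (by norm_num : (0:ℝ) ≤ 4)]
    rw [← Real.rpow_natCast ((16 * lam) ^ (-(1 : ℝ) / 4)) 2, ← Real.rpow_mul h16.le]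
    rw [show (-(1 : ℝ) / 4 * (2 : ℕ)) = -(1/2 : ℝ) by push_cast; ring]
    rw [Real.rpow_neg h16.le, ← Real.sqrt_eq_rpow, hs, one_div]
  have hM2a : 1 / (4 * a) ≤ M ^ 2 := by
    rw [← hsq2]
    exact pow_le_pow_left₀ (Real.rpow_nonneg h16.le _) (le_max_right _ _) 2
  have hM2b : 1 / a ^ 3 ≤ M ^ 2 := by
    rw [← hsq1]
    exact pow_le_pow_left₀ (Real.rpow_nonneg hlam.le _) (le_max_left _ _) 2
  set u : ℝ := Real.exp (-(a * x)) with hu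
  have hu0 : 0 < u := Real.exp_pos _
  suffices hVle : (1 - u) / (2 * a ^ 3) - x * u / (2 * a ^ 2) ≤ (M * min 1 x) ^ 2 by
    calc ((1 - u) / (2 * a ^ 3) - x * u / (2 * a ^ 2)) ^ ((1 : ℝ) / 2)
        ≤ ((M * min 1 x) ^ 2) ^ ((1 : ℝ) / 2) := Real.rpow_le_rpow hI0 hVle (by norm_num)
      _ = M * min 1 x := by
          rw [← Real.rpow_natCast (M * min 1 x) 2, ← Real.rpow_mul hq0]
          norm_num
  rcases le_total 1 x with hx1 | hx1
  · rw [min_eq_left hx1]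
    have t1 : (1 - u) / (2 * a ^ 3) ≤ 1 / a ^ 3 := by
      rw [div_le_div_iff₀ (by positivity) (by positivity)]
      nlinarith [hu0.le, pow_pos ha 3]
    have t2 : 0 ≤ x * u / (2 * a ^ 2) := by positivity
    calc (1 - u) / (2 * a ^ 3) - x * u / (2 * a ^ 2) ≤ 1 / a ^ 3 := by linarith
      _ ≤ M ^ 2 := hM2b
      _ = (M * 1) ^ 2 := by ring
  · rw [min_eq_right hx1]
    have hkey := key_ineq (mul_nonneg ha.le hx)
    have hid : (1 - u) / (2 * a ^ 3) - x * u / (2 * a ^ 2)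
        = (1 - u - a * x * u) / (2 * a ^ 3) := by
      field_simp
    have hstep : (1 - u - a * x * u) / (2 * a ^ 3) ≤ ((a * x) ^ 2 / 2) / (2 * a ^ 3) := by
      apply (div_le_div_iff_of_pos_right (by positivity)).mpr
      have : Real.exp (-(a * x)) = u := rfl
      nlinarith [hkey]
    have heq2 : ((a * x) ^ 2 / 2) / (2 * a ^ 3) = 1 / (4 * a) * x ^ 2 := by
      field_simp
      ring
    calc (1 - u) / (2 * a ^ 3) - x * u / (2 * a ^ 2)
        ≤ 1 / (4 * a) * x ^ 2 := by rw [hid, ← heq2]; exact hstep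
      _ ≤ M ^ 2 * x ^ 2 := mul_le_mul_of_nonneg_right hM2a (sq_nonneg x)
      _ = (M * x) ^ 2 := by ring

theorem green1_translation_L2_bound (lam : ℝ) (hlam : 0 < lam) (x : ℝ) :
    (∫ r : ℝ, |green1 lam (r + x) - green1 lam r| ^ 2) ^ ((1 : ℝ) / 2)
      ≤ max (lam ^ (-(3 : ℝ) / 4)) ((16 * lam) ^ (-(1 : ℝ) / 4)) * min 1 |x| := by
  rcases le_or_gt 0 x with h | h
  · simpa [abs_of_nonneg h] using key_bound lam hlam h
  · have h' : 0 ≤ -x := by linarith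
    have htrans : (∫ r : ℝ, |green1 lam (r + x) - green1 lam r| ^ 2)
        = ∫ r : ℝ, |green1 lam (r + -x) - green1 lam r| ^ 2 := by
      have h0 := integral_add_right_eq_self (μ := volume)
        (fun r : ℝ => |green1 lam (r + x) - green1 lam r| ^ 2) (-x)
      rw [← h0]
      congr 1
      funext r
      rw [show r + -x + x = r by ring, abs_sub_comm]
    rw [htrans, abs_of_neg h]
    exact key_bound lam hlam h'
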